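/- Let n ≥ 3 and consider a random orientation of the edges of the cycle C_n. Let E be the number of vertices whose in-degree is even. Then for every integer k with 0 ≤ k ≤ n/2, P[E = 2k] = C(n, 2k)/2^{n−1}, and P[E = j] = 0 for every odd j. In particular, E has the distribution of a Binomial(n, 1/2) random variable conditioned to be even. -/
import Mathlib


open Finset

namespace CycleAux
variable {n : ℕ} [NeZero n]

/-- The "change set" of a boolean sequence on the cycle. -/
def ch (x : ZMod n → Bool) : Finset (ZMod n) := univ.filter (fun v => x (v-1) ≠ x v)

lemma ch_even (x : ZMod n → Bool) : Even (ch x).card := by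
  have hcast : (((ch x).card : ℕ) : ZMod 2) = 0 := by
    rw [ch, ← Finset.sum_boole]
    have h1 : ∀ v : ZMod n, (if x (v-1) ≠ x v then (1:ZMod 2) else 0)
        = (if x (v-1) then 1 else 0) + (if x v then 1 else 0) := by
      intro v; cases hx : x (v-1) <;> cases hy : x v <;> simp <;> decide
    rw [Finset.sum_congr rfl (fun v _ => h1 v), Finset.sum_add_distrib]
    have h2 : ∑ v : ZMod n, (if x (v-1) then (1:ZMod 2) else 0)
        = ∑ v : ZMod n, (if x v then (1:ZMod 2) else 0) :=
      Fintype.sum_equiv (Equiv.subRight (1 : ZMod n)) _ _ (fun v => rfl)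
    rw [h2, ← two_mul, show (2:ZMod 2) = 0 from rfl, zero_mul]
  obtain ⟨c, hc⟩ := (ZMod.natCast_eq_zero_iff _ 2).mp hcast
  exact ⟨c, by omega⟩

lemma ch_const {x y : ZMod n → Bool} (h : ch x = ch y) (h0 : x 0 = y 0) : x = y := by
  have hpt : ∀ v : ZMod n, (x (v-1) ≠ x v) ↔ (y (v-1) ≠ y v) := by
    intro v
    have := Finset.ext_iff.mp h v
    simpa [ch] using this
  have key : ∀ k : ℕ, x (k : ZMod n) = y (k : ZMod n) := by
    intro k; induction k with
    | zero => simpa using h0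
    | succ k ih =>
      have hv : ((k+1 : ℕ) : ZMod n) - 1 = (k : ZMod n) := by push_cast; ring
      have := hpt ((k+1 : ℕ) : ZMod n)
      rw [hv] at this
      revert this ih
      cases x (k : ZMod n) <;> cases y (k : ZMod n) <;>
        cases x ((k+1:ℕ) : ZMod n) <;> cases y ((k+1:ℕ) : ZMod n) <;> simp
  funext v
  have := key v.val
  rwa [ZMod.natCast_val, ZMod.cast_id] at this

/-- toggle membership of `0` -/
def tog (S : Finset (ZMod n)) : Finset (ZMod n) := if (0 : ZMod n) ∈ S then S.erase 0 else insert 0 S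

lemma tog_parity (S : Finset (ZMod n)) : Even (tog S).card ↔ ¬ Even S.card := by
  unfold tog
  split
  · rename_i h
    have := Finset.card_erase_add_one h
    rw [← this, Nat.even_add_one]
    tauto
  · rename_i h
    rw [Finset.card_insert_of_notMem h, Nat.even_add_one]

lemma tog_tog (S : Finset (ZMod n)) : tog (tog S) = S := by
  unfold tog
  split
  · rename_i h
    rw [if_neg (Finset.notMem_erase _ _), Finset.insert_erase h]
  · rename_i h
    rw [if_pos (Finset.mem_insert_self _ _), Finset.erase_insert h]

lemma card_even_subsets : (univ.filter (fun S : Finset (ZMod n) => Even S.card)).card = 2 ^ (n - 1) := by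
  have hbij : (univ.filter (fun S : Finset (ZMod n) => Even S.card)).card
      = (univ.filter (fun S : Finset (ZMod n) => ¬ Even S.card)).card := by
    apply Finset.card_bij' (fun S _ => tog S) (fun S _ => tog S)
    · intro S hS
      simp only [mem_filter, mem_univ, true_and] at *
      exact fun he => (tog_parity S).mp he hS
    · intro S hS
      simp only [mem_filter, mem_univ, true_and] at *
      exact (tog_parity S).mpr hS
    · intro S _; exact tog_tog S
    · intro S _; exact tog_tog S
  have hsum := Finset.card_filter_add_card_filter_not
    (s := (univ : Finset (Finset (ZMod n)))) (p := fun S => Even S.card)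
  have hcard : (univ : Finset (Finset (ZMod n))).card = 2 ^ n := by
    rw [Finset.card_univ, Fintype.card_finset, ZMod.card]
  have hn1 : 2 ^ n = 2 * 2 ^ (n - 1) := by
    have : n - 1 + 1 = n := Nat.succ_pred_eq_of_pos (Nat.pos_of_ne_zero (NeZero.ne n))
    conv_lhs => rw [← this]
    rw [pow_succ]; ring
  omega

lemma card_subsets_card (m : ℕ) :
    (univ.filter (fun S : Finset (ZMod n) => S.card = m)).card = n.choose m := by
  have : univ.filter (fun S : Finset (ZMod n) => S.card = m) = (univ : Finset (ZMod n)).powersetCard m := by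
    rw [Finset.powersetCard_eq_filter, Finset.powerset_univ]
  rw [this, Finset.card_powersetCard, Finset.card_univ, ZMod.card]

def φ (x : ZMod n → Bool) : Bool × Finset (ZMod n) := (x 0, ch x)

def T (n : ℕ) [NeZero n] : Finset (Bool × Finset (ZMod n)) :=
  univ.filter (fun p => Even p.2.card)

lemma φ_inj : Function.Injective (φ (n := n)) := by
  intro x y h
  rw [φ, φ, Prod.mk.injEq] at h
  exact ch_const h.2 h.1

lemma card_T : (T n).card = 2 ^ n := by
  have hprod : T n = (univ : Finset Bool) ×ˢ (univ.filter (fun S : Finset (ZMod n) => Even S.card)) := by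
    ext p; simp [T, Finset.mem_product]
  rw [hprod, Finset.card_product, card_even_subsets, Finset.card_univ, Fintype.card_bool]
  have h1 : n - 1 + 1 = n := Nat.succ_pred_eq_of_pos (Nat.pos_of_ne_zero (NeZero.ne n))
  conv_rhs => rw [← h1]
  rw [pow_succ]; ring

lemma φ_image : (univ : Finset (ZMod n → Bool)).image φ = T n := by
  apply Finset.eq_of_subset_of_card_le
  · intro p hp
    simp only [Finset.mem_image] at hp
    obtain ⟨x, _, rfl⟩ := hp
    simp [T, φ, ch_even]
  · rw [card_T, Finset.card_image_of_injective _ φ_inj, Finset.card_univ]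
    simp [ZMod.card]

lemma card_x_layer (m : ℕ) :
    (univ.filter (fun x : ZMod n → Bool => (ch x).card = m)).card
      = ((T n).filter (fun p => p.2.card = m)).card := by
  apply Finset.card_bij (fun x _ => φ x)
  · intro x hx
    simp only [mem_filter, mem_univ, true_and] at *
    exact ⟨by simp [T]; exact ch_even x, hx⟩
  · intro x hx y hy h
    exact φ_inj h
  · intro p hp
    simp only [mem_filter] at hp
    have : p ∈ (univ : Finset (ZMod n → Bool)).image φ := by rw [φ_image]; exact hp.1
    obtain ⟨x, _, rfl⟩ := Finset.mem_image.mp this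
    exact ⟨x, by simpa [φ, ch] using hp.2, rfl⟩

lemma card_T_filter_even (k : ℕ) :
    ((T n).filter (fun p => p.2.card = 2 * k)).card = 2 * n.choose (2 * k) := by
  have : (T n).filter (fun p => p.2.card = 2 * k)
      = (univ : Finset Bool) ×ˢ (univ.filter (fun S : Finset (ZMod n) => S.card = 2 * k)) := by
    ext p
    simp only [T, Finset.mem_filter, Finset.mem_product, mem_univ, true_and,
      Finset.filter_filter]
    constructor
    · rintro ⟨_, h⟩; exact h
    · rintro h; exact ⟨h ▸ (even_two_mul k), h⟩
  rw [this, Finset.card_product, card_subsets_card, Finset.card_univ, Fintype.card_bool]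

lemma card_T_filter_odd {j : ℕ} (hj : Odd j) :
    ((T n).filter (fun p => p.2.card = j)).card = 0 := by
  rw [Finset.card_eq_zero]
  apply Finset.filter_false_of_mem
  intro p hp hpj
  simp only [T, mem_filter] at hp
  rw [hpj] at hp
  exact (Nat.not_even_iff_odd.mpr hj) hp.2

def xof (g : {g : ZMod n → ZMod n // ∀ i, g i = i ∨ g i = i + 1}) : ZMod n → Bool :=
  fun i => decide (g.1 i = i + 1)

lemma indeg_even (h1 : (1 : ZMod n) ≠ 0)
    (g : {g : ZMod n → ZMod n // ∀ i, g i = i ∨ g i = i + 1}) (v : ZMod n) :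
    Even (Finset.univ.filter fun i => g.1 i = v).card ↔ (xof g (v-1) ≠ xof g v) := by
  have hvne : v - 1 ≠ v := by
    intro h
    rw [sub_eq_self] at h
    exact h1 h
  have hvadd : v - 1 + 1 = v := sub_add_cancel v 1
  have hsub : (Finset.univ.filter fun i => g.1 i = v) = ({v-1, v} : Finset (ZMod n)).filter (fun i => g.1 i = v) := by
    ext i
    simp only [mem_filter, mem_univ, true_and, mem_insert, mem_singleton, and_comm]
    constructor
    · intro hi
      refine ⟨?_, hi⟩
      rcases g.2 i with h | h
      · right; rw [← hi, h]
      · left; rw [h] at hi; rw [← hi]; ring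
    · exact fun h => h.2
  rw [hsub]
  rw [Finset.filter_insert, Finset.filter_singleton]
  have hxv1 : xof g (v-1) = decide (g.1 (v-1) = v) := by rw [xof, hvadd]
  have hne : v ≠ v + 1 := fun hc => h1 (by linear_combination -hc)
  have hxv : xof g v = !decide (g.1 v = v) := by
    rcases g.2 v with h | h <;> simp [xof, h, h1]
  by_cases ha : g.1 (v-1) = v <;> by_cases hb : g.1 v = v <;>
    simp [ha, hb, hxv1, hxv, hvne, Finset.card_insert_of_notMem, Nat.even_iff]

lemma evenset_eq_ch (h1 : (1 : ZMod n) ≠ 0)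
    (g : {g : ZMod n → ZMod n // ∀ i, g i = i ∨ g i = i + 1}) :
    (Finset.univ.filter fun v : ZMod n =>
      Even (Finset.univ.filter fun i => g.1 i = v).card) = ch (xof g) := by
  ext v
  simp only [ch, mem_filter, mem_univ, true_and]
  exact indeg_even h1 g v

lemma card_g_layer (h1 : (1 : ZMod n) ≠ 0) (m : ℕ) :
    (univ.filter (fun g : {g : ZMod n → ZMod n // ∀ i, g i = i ∨ g i = i + 1} =>
      (Finset.univ.filter fun v : ZMod n =>
        Even (Finset.univ.filter fun i => g.1 i = v).card).card = m)).card
    = (univ.filter (fun x : ZMod n → Bool => (ch x).card = m)).card := by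
  apply Finset.card_bij (fun g _ => xof g)
  · intro g hg
    simp only [mem_filter, mem_univ, true_and] at *
    rw [← evenset_eq_ch h1 g]
    exact hg
  · intro g hg g' hg' h
    apply Subtype.ext
    funext i
    have hiff : g.1 i = i + 1 ↔ g'.1 i = i + 1 := by
      have := congrFun h i
      simpa only [xof, decide_eq_decide] using this
    have hne : i ≠ i + 1 := fun hc => h1 (by linear_combination -hc)
    rcases g.2 i with ha | ha <;> rcases g'.2 i with hb | hb
    · rw [ha, hb]
    · have hc := hiff.mpr hb
      rw [ha] at hc
      exact absurd hc hne
    · have hc := hiff.mp ha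
      rw [hb] at hc
      exact absurd hc hne
    · rw [ha, hb]
  · intro x hx
    simp only [mem_filter, mem_univ, true_and] at hx
    have hgdef : ∀ i : ZMod n, (if x i then i + 1 else i) = i ∨ (if x i then i + 1 else i) = i + 1 := by
      intro i
      split
      · exact Or.inr rfl
      · exact Or.inl rfl
    refine ⟨⟨fun i => if x i then i + 1 else i, hgdef⟩, ?_, ?_⟩
    · have hx' : xof ⟨fun i => if x i then i + 1 else i, hgdef⟩ = x := by
        funext i
        cases hxi : x i <;> simp [xof, hxi, h1]
      simp only [mem_filter, mem_univ, true_and]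
      have h2 := evenset_eq_ch h1 ⟨fun i => if x i then i + 1 else i, hgdef⟩
      rw [hx'] at h2
      exact (congrArg Finset.card h2).trans hx
    · funext i
      cases hxi : x i <;> simp [xof, hxi, h1]

lemma card_g_final (h1 : (1 : ZMod n) ≠ 0) (m : ℕ) :
    (univ.filter (fun g : {g : ZMod n → ZMod n // ∀ i, g i = i ∨ g i = i + 1} =>
      (Finset.univ.filter fun v : ZMod n =>
        Even (Finset.univ.filter fun i => g.1 i = v).card).card = m)).card
    = ((T n).filter (fun p => p.2.card = m)).card := by
  rw [card_g_layer h1 m, card_x_layer m]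

end CycleAux

/-- Consider the cycle `C_n` (`n ≥ 3`) with vertex set `ZMod n` and edges `{i, i+1}`.
A random orientation assigns to each edge, independently and uniformly, one of its two
endpoints; an orientation is an element `g` of the subtype
`{g : ZMod n → ZMod n // ∀ i, g i = i ∨ g i = i + 1}`, each having probability
`1 / 2 ^ n`.  Let `E` be the number of vertices with even in-degree.  Then
`P[E = 2k] = n.choose (2k) / 2 ^ (n-1)` for every `k` with `2k ≤ n`, and
`P[E = j] = 0` for every odd `j`; that is, `E` has the distribution of a
`Binomial(n, 1/2)` random variable conditioned to be even. -/
theorem cycle_even_indegree_dist (n : ℕ) [NeZero n] (hn : 3 ≤ n) :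
    (∀ k : ℕ, 2 * k ≤ n →
      (∑ g ∈ Finset.univ.filter
          (fun g : {g : ZMod n → ZMod n // ∀ i, g i = i ∨ g i = i + 1} =>
            (Finset.univ.filter fun v : ZMod n =>
              Even (Finset.univ.filter fun i => g.1 i = v).card).card = 2 * k),
          (1 : ℝ) / 2 ^ n) = (n.choose (2 * k) : ℝ) / 2 ^ (n - 1)) ∧
    (∀ j : ℕ, Odd j →
      (∑ g ∈ Finset.univ.filter
          (fun g : {g : ZMod n → ZMod n // ∀ i, g i = i ∨ g i = i + 1} =>
            (Finset.univ.filter fun v : ZMod n =>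
              Even (Finset.univ.filter fun i => g.1 i = v).card).card = j),
          (1 : ℝ) / 2 ^ n) = 0) := by
  have h1 : (1 : ZMod n) ≠ 0 := by
    intro h
    have : ((1 : ℕ) : ZMod n) = 0 := by simpa using h
    have hd := (ZMod.natCast_eq_zero_iff 1 n).mp this
    have := Nat.le_of_dvd one_pos hd
    omega
  have hpow : (2:ℝ) ^ n = 2 * 2 ^ (n - 1) := by
    have h : n - 1 + 1 = n := by omega
    conv_lhs => rw [← h]
    rw [pow_succ]; ring
  constructor
  · intro k hk
    rw [Finset.sum_const, CycleAux.card_g_final h1, CycleAux.card_T_filter_even,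
      nsmul_eq_mul]
    push_cast
    rw [hpow]
    have : (2:ℝ) ^ (n-1) ≠ 0 := by positivity
    field_simp
  · intro j hj
    rw [Finset.sum_const, CycleAux.card_g_final h1, CycleAux.card_T_filter_odd hj]
    simp
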